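/- arXiv:1805.03588 — 2 statements merged into one kernel-verified Lean document; each statement's English description precedes it below -/
import Mathlib

section
/- Let K ⊆ ℝ^k be a nonempty closed set, let f_0, f_1, …, f_p be real-valued Borel-measurable functions on K, let K_0, K_1, …, K_p be Borel-measurable subsets of K, and let b_1, …, b_p ∈ ℝ. Consider the problem of moments val := inf over Borel probability measures P supported on K satisfying ∫_{K_i} f_i dP = b_i for i = 1,…,p (with all f_i P-integrable) of ∫_{K_0} f_0 dP. If this infimum is attained by some feasible Borel probability measure, then it is attained by a probability measure that is a convex combination of at most p+2 Dirac point measures at points of K, i.e., P* = Σ_{j=1}^{p+2} w_j δ_{x_j} with w_j ≥ 0, Σ_j w_j = 1, x_j ∈ K, which is feasible and satisfies ∫_{K_0} f_0 dP* = val. -/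
/-!
The moments of a feasible `P` form the vector `∫ φ dP ∈ ℝ^(p+1)` of the moment map
`φ z = (1_{K₀} f₀ z, 1_{K₁} f₁ z, …, 1_{Kₚ} fₚ z)`, and `φ` takes its values in `φ '' K`
`P`-almost everywhere. The barycenter of a probability measure on a finite-dimensional space lies
in the convex hull (not only in its closure) of any set carrying the measure: by induction on the
dimension, either the barycenter is interior to the hull, or a supporting hyperplane through it
carries the measure and one passes to a space of smaller dimension. By Carathéodory, `∫ φ dP` is
then a convex combination of `p + 2` points `φ xⱼ` with `xⱼ ∈ K`, and the measure
`∑ wⱼ δ_{xⱼ}` has the same moments as `P`.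
-/

open MeasureTheory Module
open scoped NNReal ENNReal

universe u

section IntegralMemConvexHull

variable {α : Type*} [MeasurableSpace α] {μ : Measure α}
  {E : Type u} [NormedAddCommGroup E] [NormedSpace ℝ E] [FiniteDimensional ℝ E]

lemma exists_ae_eq_forall_mem [NeZero μ] {β : Type*} {f : α → β} {s : Set β}
    (h : ∀ᵐ x ∂μ, f x ∈ s) : ∃ g : α → β, f =ᵐ[μ] g ∧ ∀ x, g x ∈ s := by
  classical
  obtain ⟨x₀, hx₀⟩ := h.exists
  refine ⟨fun x => if f x ∈ s then f x else f x₀, ?_, fun x => ?_⟩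
  · filter_upwards [h] with x hx using (if_pos hx).symm
  · dsimp only
    split_ifs with hx <;> assumption

lemma ae_eq_integral_of_ae_le_integral [IsProbabilityMeasure μ] {g : α → ℝ}
    (hg : Integrable g μ) (hle : ∀ᵐ x ∂μ, g x ≤ ∫ y, g y ∂μ) :
    ∀ᵐ x ∂μ, g x = ∫ y, g y ∂μ := by
  have hgap : ∫ x, (∫ y, g y ∂μ) - g x ∂μ = 0 := by
    rw [integral_sub (integrable_const _) hg, integral_const, probReal_univ, one_smul, sub_self]
  have hgap_nonneg : ∀ᵐ x ∂μ, 0 ≤ (∫ y, g y ∂μ) - g x := by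
    filter_upwards [hle] with x hx using sub_nonneg.2 hx
  filter_upwards [(integral_eq_zero_iff_of_nonneg_ae hgap_nonneg
    ((integrable_const _).sub hg)).1 hgap] with x hx
  exact (sub_eq_zero.1 hx).symm

lemma integral_mem_convexHull_of_sub_mem [IsProbabilityMeasure μ] (W : Submodule ℝ E)
    (hW : ∀ (g : α → W) (t : Set W), Integrable g μ → (∀ᵐ x ∂μ, g x ∈ t) →
      ∫ x, g x ∂μ ∈ convexHull ℝ t)
    {f : α → E} {s : Set E} (hf : Integrable f μ) (hfs : ∀ᵐ x ∂μ, f x ∈ s) (c : E)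
    (hsc : ∀ y ∈ s, y - c ∈ W) : ∫ x, f x ∂μ ∈ convexHull ℝ s := by
  obtain ⟨f', hff', hf's⟩ := exists_ae_eq_forall_mem hfs
  rw [integral_congr_ae hff']
  let g : α → W := fun x => ⟨f' x - c, hsc _ (hf's x)⟩
  let T : W →ᵃ[ℝ] E := W.subtype.toAffineMap + AffineMap.const ℝ W c
  have hTg : ∀ x, T (g x) = f' x := fun x => by simp [T, g]
  have hg_coe : Integrable (fun x => W.subtypeₗᵢ (g x)) μ :=
    (hf.congr hff').sub (integrable_const c)
  have hg : Integrable g μ :=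
    (LipschitzWith.integrable_comp_iff_of_antilipschitz W.subtypeₗᵢ.lipschitz
      W.subtypeₗᵢ.antilipschitz (map_zero _)).1 hg_coe
  have hint : ∫ x, f' x ∂μ = T (∫ x, g x ∂μ) := by
    calc ∫ x, f' x ∂μ = ∫ x, (W.subtypeₗᵢ (g x) + c) ∂μ := by simp [g]
      _ = W.subtypeₗᵢ (∫ x, g x ∂μ) + c := by
        rw [integral_add hg_coe (integrable_const c),
          W.subtypeₗᵢ.integral_comp_comm, integral_const, probReal_univ, one_smul]
      _ = T (∫ x, g x ∂μ) := by simp [T]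
  have hmem := hW g (T ⁻¹' s) hg (Filter.Eventually.of_forall fun x => by simp [hTg, hf's])
  rw [hint]
  refine convexHull_mono (Set.image_preimage_subset T s) ?_
  rw [← T.image_convexHull]
  exact Set.mem_image_of_mem T hmem

lemma integral_mem_convexHull_of_forall_ne_top [IsProbabilityMeasure μ]
    (hW : ∀ W : Submodule ℝ E, W ≠ ⊤ → ∀ (g : α → W) (t : Set W), Integrable g μ →
      (∀ᵐ x ∂μ, g x ∈ t) → ∫ x, g x ∂μ ∈ convexHull ℝ t)
    {f : α → E} {s : Set E} (hf : Integrable f μ) (hfs : ∀ᵐ x ∂μ, f x ∈ s) :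
    ∫ x, f x ∂μ ∈ convexHull ℝ s := by
  obtain ⟨x₀, hx₀⟩ := hfs.exists
  by_cases hspan : vectorSpan ℝ s = ⊤
  swap
  · exact integral_mem_convexHull_of_sub_mem _ (hW _ hspan) hf hfs (f x₀)
      fun y hy => vsub_mem_vectorSpan ℝ hy hx₀
  set b := ∫ x, f x ∂μ
  have hint : (interior (convexHull ℝ s)).Nonempty := by
    rwa [(convex_convexHull ℝ s).interior_nonempty_iff_affineSpan_eq_top, affineSpan_convexHull,
      AffineSubspace.affineSpan_eq_top_iff_vectorSpan_eq_top_of_nonempty ℝ E E ⟨_, hx₀⟩]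
  by_cases hb : b ∈ interior (convexHull ℝ s)
  · exact interior_subset hb
  obtain ⟨ℓ, hℓ0, hℓ⟩ :=
    geometric_hahn_banach_of_nonempty_interior_point (convex_convexHull ℝ s) hb hint
  have hface : ∀ᵐ x ∂μ, ℓ (f x) = ℓ b := by
    rw [← ℓ.integral_comp_comm hf]
    refine ae_eq_integral_of_ae_le_integral (ℓ.integrable_comp hf) ?_
    filter_upwards [hfs] with x hx
    rw [ℓ.integral_comp_comm hf]
    exact hℓ _ (subset_convexHull ℝ s hx)
  have hker : LinearMap.ker (ℓ : E →ₗ[ℝ] ℝ) ≠ ⊤ := by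
    rw [Ne, LinearMap.ker_eq_top]
    exact fun h => hℓ0 (ContinuousLinearMap.coe_injective h)
  refine convexHull_mono (fun y (hy : y ∈ s ∧ ℓ y = ℓ b) => hy.1) ?_
  exact integral_mem_convexHull_of_sub_mem _ (hW _ hker) hf (hfs.and hface) b
    fun y hy => by simp [hy.2]

theorem integral_mem_convexHull [IsProbabilityMeasure μ] {f : α → E} {s : Set E}
    (hf : Integrable f μ) (hfs : ∀ᵐ x ∂μ, f x ∈ s) : ∫ x, f x ∂μ ∈ convexHull ℝ s := by
  induction hn : finrank ℝ E using Nat.strong_induction_on generalizing E with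
  | _ n ih =>
    refine integral_mem_convexHull_of_forall_ne_top (fun W hW g t hg hgt => ?_) hf hfs
    exact ih _ (hn ▸ Submodule.finrank_lt hW) hg hgt rfl

end IntegralMemConvexHull

theorem exists_fin_convex_combination_of_mem_convexHull {E : Type*} [AddCommGroup E]
    [Module ℝ E] [FiniteDimensional ℝ E] {s : Set E} {x : E} (hx : x ∈ convexHull ℝ s) {N : ℕ}
    (hN : finrank ℝ E + 1 ≤ N) :
    ∃ (w : Fin N → ℝ≥0) (z : Fin N → E),
      (∀ j, z j ∈ s) ∧ ∑ j, (w j : ℝ) = 1 ∧ ∑ j, (w j : ℝ) • z j = x := by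
  obtain ⟨y, hy⟩ : s.Nonempty := convexHull_nonempty_iff.1 ⟨x, hx⟩
  obtain ⟨ι, _, z, w, hzs, hind, hw, hw1, hwz⟩ := eq_pos_convex_span_of_mem_convexHull hx
  have hcard : Fintype.card ι ≤ Fintype.card (Fin N) := by
    have hind_card := hind.card_le_finrank_succ
    have hspan_le := Submodule.finrank_le (vectorSpan ℝ (Set.range z))
    simp only [Fintype.card_fin]
    omega
  obtain ⟨e⟩ := Function.Embedding.nonempty_of_card_le hcard
  set w' : Fin N → ℝ≥0 := Function.extend e (fun i => ⟨w i, (hw i).le⟩) 0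
  have hw'e : ∀ i, (w' (e i) : ℝ) = w i := fun i =>
    congrArg NNReal.toReal (e.injective.extend_apply _ _ i)
  have hw'0 : ∀ j ∉ Set.range e, w' j = 0 := fun j hj =>
    Function.extend_apply' _ _ _ (by simpa using hj)
  set z' : Fin N → E := Function.extend e z fun _ => y
  refine ⟨w', z', fun j => ?_, ?_, ?_⟩
  · by_cases hj : j ∈ Set.range e
    · obtain ⟨i, rfl⟩ := hj
      simpa [z', e.injective.extend_apply] using hzs (Set.mem_range_self i)
    · simpa [z', Function.extend_apply' _ _ _ (by simpa using hj)] using hy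
  · rw [← hw1]
    exact (Fintype.sum_of_injective e e.injective _ _ (fun j hj => by simp [hw'0 j hj])
      fun i => (hw'e i).symm).symm
  · rw [← hwz]
    refine (Fintype.sum_of_injective e e.injective _ _ (fun j hj => by simp [hw'0 j hj])
      fun i => ?_).symm
    simp [hw'e, z', e.injective.extend_apply]

section AtomicMeasure

variable {α : Type*} [MeasurableSpace α] {ι : Type*} [Fintype ι] (w : ι → ℝ≥0) (x : ι → α)

lemma isProbabilityMeasure_sum_smul_dirac (hw : ∑ j, w j = 1) :
    IsProbabilityMeasure (∑ j, (w j : ℝ≥0∞) • Measure.dirac (x j)) := by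
  constructor
  simp [Measure.finsetSum_apply, ← ENNReal.ofNNReal_finsetSum, hw]

variable [MeasurableSingletonClass α]

lemma integrable_sum_smul_dirac {E : Type*} [NormedAddCommGroup E] (g : α → E) :
    Integrable g (∑ j, (w j : ℝ≥0∞) • Measure.dirac (x j)) :=
  integrable_finsetSum_measure.2 fun j _ =>
    (integrable_dirac (by simp)).smul_measure ENNReal.coe_ne_top

lemma integral_sum_smul_dirac {E : Type*} [NormedAddCommGroup E] [NormedSpace ℝ E] [CompleteSpace E]
    (g : α → E) :
    ∫ a, g a ∂(∑ j, (w j : ℝ≥0∞) • Measure.dirac (x j)) = ∑ j, (w j : ℝ) • g (x j) := by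
  rw [integral_finsetSum_measure fun j _ =>
    (integrable_dirac (by simp)).smul_measure ENNReal.coe_ne_top]
  simp only [integral_smul_measure, integral_dirac, ENNReal.coe_toReal]

lemma sum_smul_dirac_apply_eq_zero {s : Set α} (hx : ∀ j, x j ∉ s) :
    (∑ j, (w j : ℝ≥0∞) • Measure.dirac (x j)) s = 0 := by
  simp [Measure.finsetSum_apply, Measure.dirac_apply, hx]

end AtomicMeasure

theorem exists_sum_smul_dirac_integral_eq {α : Type*} [MeasurableSpace α]
    [MeasurableSingletonClass α] {ι : Type*} [Fintype ι] (P : Measure α) [IsProbabilityMeasure P]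
    {g : ι → α → ℝ} (hg : ∀ i, Integrable (g i) P) {K : Set α} (hK : ∀ᵐ a ∂P, a ∈ K) {N : ℕ}
    (hN : Fintype.card ι + 1 ≤ N) :
    ∃ (w : Fin N → ℝ≥0) (x : Fin N → α), (∀ j, x j ∈ K) ∧ ∑ j, (w j : ℝ) = 1 ∧
      ∀ i, ∫ a, g i a ∂(∑ j, (w j : ℝ≥0∞) • Measure.dirac (x j)) = ∫ a, g i a ∂P := by
  let φ : α → ι → ℝ := fun a i => g i a
  have hmem : ∫ a, φ a ∂P ∈ convexHull ℝ (φ '' K) :=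
    integral_mem_convexHull (Integrable.of_eval hg) (hK.mono fun a ha => Set.mem_image_of_mem φ ha)
  obtain ⟨w, z, hz, hw1, hwz⟩ :=
    exists_fin_convex_combination_of_mem_convexHull hmem (by simpa using hN)
  choose x hxK hxz using hz
  refine ⟨w, x, hxK, hw1, fun i => ?_⟩
  rw [integral_sum_smul_dirac, ← eval_integral hg i, ← hwz]
  simp [φ, ← hxz]

theorem moment_problem_attained_by_atomic_general
    {k : ℕ} (p : ℕ) (K : Set (Fin k → ℝ))
    (f0 : (Fin k → ℝ) → ℝ) (f : Fin p → (Fin k → ℝ) → ℝ)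
    (K0 : Set (Fin k → ℝ)) (Ks : Fin p → Set (Fin k → ℝ))
    (hK0 : MeasurableSet K0 ∧ K0 ⊆ K) (hKs : ∀ i, MeasurableSet (Ks i) ∧ Ks i ⊆ K)
    (b : Fin p → ℝ)
    (Feas : Measure (Fin k → ℝ) → Prop)
    (hFeas : ∀ P : Measure (Fin k → ℝ), Feas P ↔ IsProbabilityMeasure P ∧ P Kᶜ = 0 ∧
      IntegrableOn f0 K0 P ∧ (∀ i, IntegrableOn (f i) (Ks i) P) ∧
      (∀ i, (∫ z in Ks i, f i z ∂P) = b i))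
    (val : ℝ)
    (hatt : ∃ P, Feas P ∧ (∫ z in K0, f0 z ∂P) = val) :
    ∃ (w : Fin (p + 2) → ℝ≥0) (x : Fin (p + 2) → Fin k → ℝ),
      (∀ j, x j ∈ K) ∧ (∑ j, (w j : ℝ)) = 1 ∧
      Feas (∑ j, (w j : ℝ≥0∞) • Measure.dirac (x j)) ∧
      (∫ z in K0, f0 z ∂(∑ j, (w j : ℝ≥0∞) • Measure.dirac (x j))) = val := by
  obtain ⟨P, hP, hPval⟩ := hatt
  obtain ⟨hPprob, hPK, hint0, hints, hPb⟩ := (hFeas P).1 hP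
  let g : Fin (p + 1) → (Fin k → ℝ) → ℝ :=
    Fin.cons (K0.indicator f0) fun i => (Ks i).indicator (f i)
  have hg : ∀ j, Integrable (g j) P := Fin.cases ((integrable_indicator_iff hK0.1).2 hint0)
    fun i => (integrable_indicator_iff (hKs i).1).2 (hints i)
  obtain ⟨w, x, hxK, hw1, hwg⟩ := exists_sum_smul_dirac_integral_eq P hg (mem_ae_iff.2 hPK)
    (N := p + 2) (by simp)
  have hQ0 := hwg 0
  have hQs := fun i : Fin p => hwg i.succ
  simp only [g, Fin.cons_zero, Fin.cons_succ, integral_indicator hK0.1,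
    integral_indicator (hKs _).1] at hQ0 hQs
  refine ⟨w, x, hxK, hw1, (hFeas _).2 ⟨isProbabilityMeasure_sum_smul_dirac w x
    (by exact_mod_cast hw1), sum_smul_dirac_apply_eq_zero w x fun j hj => hj (hxK j),
    (integrable_sum_smul_dirac w x _).integrableOn,
    fun i => (integrable_sum_smul_dirac w x _).integrableOn, fun i => (hQs i).trans (hPb i)⟩,
    hQ0.trans hPval⟩

/-- if the generalized problem of moments is attained by some feasible Borel
probability measure, then it is attained by a convex combination of at most `p+2` Dirac
measures at points of `K`. -/
theorem moment_problem_attained_by_atomic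
    {k : ℕ} (p : ℕ) (K : Set (Fin k → ℝ)) (hKcl : IsClosed K) (hKne : K.Nonempty)
    (f0 : (Fin k → ℝ) → ℝ) (f : Fin p → (Fin k → ℝ) → ℝ)
    (hmeas0 : Measurable f0) (hmeas : ∀ i, Measurable (f i))
    (K0 : Set (Fin k → ℝ)) (Ks : Fin p → Set (Fin k → ℝ))
    (hK0 : MeasurableSet K0 ∧ K0 ⊆ K) (hKs : ∀ i, MeasurableSet (Ks i) ∧ Ks i ⊆ K)
    (b : Fin p → ℝ)
    (Feas : Measure (Fin k → ℝ) → Prop)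
    (hFeas : ∀ P : Measure (Fin k → ℝ), Feas P ↔ IsProbabilityMeasure P ∧ P Kᶜ = 0 ∧
      IntegrableOn f0 K0 P ∧ (∀ i, IntegrableOn (f i) (Ks i) P) ∧
      (∀ i, (∫ z in Ks i, f i z ∂P) = b i))
    (val : ℝ)
    (hval : val = sInf {v : ℝ | ∃ P, Feas P ∧ v = ∫ z in K0, f0 z ∂P})
    (hatt : ∃ P, Feas P ∧ (∫ z in K0, f0 z ∂P) = val) :
    ∃ (w : Fin (p + 2) → ℝ≥0) (x : Fin (p + 2) → Fin k → ℝ),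
      (∀ j, x j ∈ K) ∧ (∑ j, (w j : ℝ)) = 1 ∧
      Feas (∑ j, (w j : ℝ≥0∞) • Measure.dirac (x j)) ∧
      (∫ z in K0, f0 z ∂(∑ j, (w j : ℝ≥0∞) • Measure.dirac (x j))) = val :=
  moment_problem_attained_by_atomic_general p K f0 f K0 Ks hK0 hKs b Feas hFeas val hatt
end

section
/- Let K ⊂ ℝ^n be a compact convex set with nonempty interior, let μ be the Lebesgue measure restricted to K, let f_0, f_1, …, f_p be polynomials on ℝ^n, and let b_1, …, b_p ∈ ℝ. Suppose the problem of moments val := inf over Borel probability measures P supported on K with ∫_K f_i dP = b_i for i = 1,…,p of ∫_K f_0 dP is attained by some feasible probability measure. Then for every ε > 0 there exist d ∈ ℕ and an SOS density h of degree 2d (with respect to μ) such that |∫_K f_0(z) h(z) dμ(z) − val| < ε and |∫_K f_i(z) h(z) dμ(z) − b_i| < ε for all i = 1, …, p. -/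
/-!
The moment vectors `(∫ gᵢ h dμ)ᵢ` of SOS densities `h` of all degrees form a convex set `S`,
because sums of squares are closed under nonnegative combinations. For `x ∈ K` the peak
polynomial `u(z) = 1 - |z - x|² / M` is `1` at `x` and lies in `[0, 1)` elsewhere on `K`, so the
SOS densities `u²ᵈ / ∫_K u²ᵈ` concentrate at `x`: a neighbourhood of `x` in the convex body `K`
has positive volume, and it carries weight at least `c βᵈ` against `θᵈ` far from `x`, for some
`θ < β < 1`. Hence the evaluation `(gᵢ(x))ᵢ` lies in the closure of `S`, and so does the closed
convex hull of these evaluations over `K`, which contains the moment vector `(val, b)` of the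
optimal measure.
-/

open MeasureTheory MvPolynomial

noncomputable section

/-- A polynomial is a sum of squares of polynomials each of total degree at most `r`
(hence itself of degree at most `2r`). -/
def IsSOS {m : ℕ} (r : ℕ) (h : MvPolynomial (Fin m) ℝ) : Prop :=
  ∃ (N : ℕ) (q : Fin N → MvPolynomial (Fin m) ℝ),
    h = ∑ j, q j ^ 2 ∧ ∀ j, (q j).totalDegree ≤ r

open Filter Metric Set Topology

namespace IsSOS

variable {m r : ℕ} {h h₁ h₂ : MvPolynomial (Fin m) ℝ}

theorem mono {r' : ℕ} (hr : r ≤ r') (hh : IsSOS r h) : IsSOS r' h := by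
  obtain ⟨N, q, rfl, hq⟩ := hh
  exact ⟨N, q, rfl, fun j => (hq j).trans hr⟩

theorem add (hh₁ : IsSOS r h₁) (hh₂ : IsSOS r h₂) : IsSOS r (h₁ + h₂) := by
  obtain ⟨N₁, q₁, rfl, hq₁⟩ := hh₁
  obtain ⟨N₂, q₂, rfl, hq₂⟩ := hh₂
  refine ⟨N₁ + N₂, Fin.append q₁ q₂, by simp [Fin.sum_univ_add], Fin.addCases ?_ ?_⟩ <;>
    simpa

theorem C_mul {c : ℝ} (hc : 0 ≤ c) (hh : IsSOS r h) : IsSOS r (C c * h) := by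
  obtain ⟨N, q, rfl, hq⟩ := hh
  refine ⟨N, fun j => C √c * q j, ?_, fun j => (totalDegree_mul _ _).trans ?_⟩
  · simp [mul_pow, ← map_pow, Real.sq_sqrt hc, Finset.mul_sum]
  · simpa using hq j

end IsSOS

theorem isSOS_sq {m r : ℕ} {q : MvPolynomial (Fin m) ℝ} (hq : q.totalDegree ≤ r) :
    IsSOS r (q ^ 2) :=
  ⟨1, fun _ => q, by simp, fun _ => hq⟩

section Concentration

variable {X : Type*} [MetricSpace X] {K : Set X} {u : X → ℝ} {x₀ : X}

theorem exists_lt_forall_le_of_le_dist (hK : IsCompact K) (hu : Continuous u)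
    (hu0 : ∀ z ∈ K, 0 ≤ u z) (hpos : 0 < u x₀) (hlt : ∀ z ∈ K, z ≠ x₀ → u z < u x₀) {r : ℝ}
    (hr : 0 < r) :
    ∃ θ, 0 ≤ θ ∧ θ < u x₀ ∧ ∀ z ∈ K, r ≤ dist z x₀ → u z ≤ θ := by
  set F := K ∩ {z | r ≤ dist z x₀}
  have hF : IsCompact F :=
    hK.inter_right (isClosed_le continuous_const (continuous_id.dist continuous_const))
  rcases F.eq_empty_or_nonempty with hempty | hne
  · exact ⟨0, le_rfl, hpos, fun z hz hrz => (hempty.subset ⟨hz, hrz⟩).elim⟩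
  · obtain ⟨z₁, ⟨hz₁K, hz₁r⟩, hmax⟩ := hF.exists_isMaxOn hne hu.continuousOn
    exact ⟨u z₁, hu0 z₁ hz₁K, hlt z₁ hz₁K (dist_pos.1 (hr.trans_le hz₁r)),
      fun z hz hrz => hmax ⟨hz, hrz⟩⟩

variable [MeasurableSpace X] [OpensMeasurableSpace X] {μ : Measure X} [IsFiniteMeasureOnCompacts μ]

theorem pow_mul_measureReal_le_setIntegral_pow (hK : IsCompact K) (hu : Continuous u)
    (hu0 : ∀ z ∈ K, 0 ≤ u z) {A : Set X} (hA : MeasurableSet A) (hAK : A ⊆ K) {β : ℝ}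
    (hβ : 0 ≤ β) (hβu : ∀ z ∈ A, β ≤ u z) (d : ℕ) :
    β ^ d * μ.real A ≤ ∫ z in K, u z ^ d ∂μ := by
  have hint : IntegrableOn (fun z => u z ^ d) K μ :=
    (hu.pow d).continuousOn.integrableOn_compact hK
  calc β ^ d * μ.real A = ∫ _ in A, β ^ d ∂μ := by rw [setIntegral_const, smul_eq_mul, mul_comm]
    _ ≤ ∫ z in A, u z ^ d ∂μ :=
      setIntegral_mono_on (integrableOn_const (measure_mono hAK |>.trans_lt hK.measure_lt_top).ne)
        (hint.mono_set hAK) hA fun z hz => pow_le_pow_left₀ hβ (hβu z hz) d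
    _ ≤ ∫ z in K, u z ^ d ∂μ :=
      setIntegral_mono_set hint
        (ae_restrict_of_forall_mem hK.measurableSet fun z hz => pow_nonneg (hu0 z hz) d)
        hAK.eventuallyLE

theorem exists_pos_forall_mul_pow_le_setIntegral_pow (hK : IsCompact K) (hu : Continuous u)
    (hu0 : ∀ z ∈ K, 0 ≤ u z) (hsupp : ∀ s > 0, 0 < μ (K ∩ ball x₀ s)) {β : ℝ} (hβ0 : 0 ≤ β)
    (hβ : β < u x₀) : ∃ c > 0, ∀ d : ℕ, c * β ^ d ≤ ∫ z in K, u z ^ d ∂μ := by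
  obtain ⟨s, hs, hball⟩ :=
    Metric.mem_nhds_iff.1 (hu.continuousAt.preimage_mem_nhds (Ici_mem_nhds hβ))
  have hfin : μ (K ∩ ball x₀ s) ≠ ⊤ :=
    (measure_mono inter_subset_left |>.trans_lt hK.measure_lt_top).ne
  refine ⟨μ.real (K ∩ ball x₀ s), ENNReal.toReal_pos (hsupp s hs).ne' hfin, fun d => ?_⟩
  rw [mul_comm]
  exact pow_mul_measureReal_le_setIntegral_pow hK hu hu0
    (hK.measurableSet.inter measurableSet_ball) inter_subset_left hβ0 (fun z hz => hball hz.2) d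

theorem setIntegral_pow_pos (hK : IsCompact K) (hu : Continuous u) (hu0 : ∀ z ∈ K, 0 ≤ u z)
    (hsupp : ∀ s > 0, 0 < μ (K ∩ ball x₀ s)) (hpos : 0 < u x₀) (d : ℕ) :
    0 < ∫ z in K, u z ^ d ∂μ := by
  obtain ⟨c, hc, hle⟩ := exists_pos_forall_mul_pow_le_setIntegral_pow hK hu hu0 hsupp
    (half_pos hpos).le (half_lt_self hpos)
  exact (mul_pos hc (pow_pos (half_pos hpos) d)).trans_le (hle d)

theorem tendsto_pow_div_setIntegral_pow (hK : IsCompact K) (hu : Continuous u)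
    (hu0 : ∀ z ∈ K, 0 ≤ u z) (hsupp : ∀ s > 0, 0 < μ (K ∩ ball x₀ s)) {θ : ℝ} (hθ0 : 0 ≤ θ)
    (hθ : θ < u x₀) : Tendsto (fun d : ℕ => θ ^ d / ∫ z in K, u z ^ d ∂μ) atTop (𝓝 0) := by
  obtain ⟨β, hθβ, hβ⟩ := exists_between hθ
  have hβ0 : 0 < β := hθ0.trans_lt hθβ
  obtain ⟨c, hc, hle⟩ := exists_pos_forall_mul_pow_le_setIntegral_pow hK hu hu0 hsupp hβ0.le hβ
  have hgeom : Tendsto (fun d : ℕ => (θ / β) ^ d / c) atTop (𝓝 0) := by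
    simpa using (tendsto_pow_atTop_nhds_zero_of_lt_one (div_nonneg hθ0 hβ0.le)
      ((div_lt_one hβ0).2 hθβ)).div_const c
  refine squeeze_zero (fun d => div_nonneg (pow_nonneg hθ0 d)
    ((mul_pos hc (pow_pos hβ0 d)).le.trans (hle d))) (fun d => ?_) hgeom
  calc θ ^ d / ∫ z in K, u z ^ d ∂μ ≤ θ ^ d / (c * β ^ d) :=
        div_le_div_of_nonneg_left (pow_nonneg hθ0 d) (mul_pos hc (pow_pos hβ0 d)) (hle d)
    _ = (θ / β) ^ d / c := by rw [div_pow]; field_simp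

theorem abs_setIntegral_mul_pow_sub_le (hK : IsCompact K) (hu : Continuous u)
    (hu0 : ∀ z ∈ K, 0 ≤ u z) {φ : X → ℝ} (hφ : Continuous φ) {a ε C θ r : ℝ} (hε : 0 ≤ ε)
    (hθ0 : 0 ≤ θ) (hnear : ∀ z ∈ K, dist z x₀ < r → |φ z - a| ≤ ε)
    (hbound : ∀ z ∈ K, |φ z - a| ≤ C) (hfar : ∀ z ∈ K, r ≤ dist z x₀ → u z ≤ θ) (d : ℕ) :
    |∫ z in K, φ z * u z ^ d ∂μ - a * ∫ z in K, u z ^ d ∂μ| ≤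
      ε * ∫ z in K, u z ^ d ∂μ + C * θ ^ d * μ.real K := by
  have hint (ψ : X → ℝ) (hψ : Continuous ψ) : IntegrableOn ψ K μ :=
    hψ.continuousOn.integrableOn_compact hK
  have hpointwise : ∀ z ∈ K, |(φ z - a) * u z ^ d| ≤ ε * u z ^ d + C * θ ^ d := by
    intro z hz
    have hud : 0 ≤ u z ^ d := pow_nonneg (hu0 z hz) d
    have hC : 0 ≤ C := (abs_nonneg _).trans (hbound z hz)
    rw [abs_mul, abs_of_nonneg hud]
    rcases lt_or_ge (dist z x₀) r with hzr | hzr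
    · nlinarith [mul_le_mul_of_nonneg_right (hnear z hz hzr) hud, pow_nonneg hθ0 d]
    · have : u z ^ d ≤ θ ^ d := pow_le_pow_left₀ (hu0 z hz) (hfar z hz hzr) d
      nlinarith [mul_le_mul_of_nonneg_right (hbound z hz) hud, mul_le_mul_of_nonneg_left this hC]
  calc |∫ z in K, φ z * u z ^ d ∂μ - a * ∫ z in K, u z ^ d ∂μ|
      = |∫ z in K, (φ z - a) * u z ^ d ∂μ| := by
        rw [← integral_const_mul, ← integral_sub (hint (fun z => φ z * u z ^ d) (by fun_prop))
          (hint (fun z => a * u z ^ d) (by fun_prop))]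
        simp_rw [sub_mul]
    _ ≤ ∫ z in K, (ε * u z ^ d + C * θ ^ d) ∂μ :=
        (abs_integral_le_integral_abs).trans (setIntegral_mono_on
          (hint _ (by fun_prop)).abs (hint _ (by fun_prop)) hK.measurableSet
          hpointwise)
    _ = ε * ∫ z in K, u z ^ d ∂μ + C * θ ^ d * μ.real K := by
        rw [integral_add (hint (fun z => ε * u z ^ d) (by fun_prop))
          (integrableOn_const hK.measure_lt_top.ne), integral_const_mul, setIntegral_const,
          smul_eq_mul, mul_comm (μ.real K)]

theorem tendsto_setIntegral_mul_pow_div_setIntegral_pow (hK : IsCompact K) (hu : Continuous u)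
    (hu0 : ∀ z ∈ K, 0 ≤ u z) (hpos : 0 < u x₀) (hlt : ∀ z ∈ K, z ≠ x₀ → u z < u x₀)
    (hsupp : ∀ s > 0, 0 < μ (K ∩ ball x₀ s)) {φ : X → ℝ} (hφ : Continuous φ) :
    Tendsto (fun d : ℕ => (∫ z in K, φ z * u z ^ d ∂μ) / ∫ z in K, u z ^ d ∂μ) atTop
      (𝓝 (φ x₀)) := by
  refine Metric.tendsto_nhds.2 fun ε hε => ?_
  obtain ⟨C, hC⟩ := hK.exists_bound_of_continuousOn (hφ.sub continuous_const).continuousOn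
  obtain ⟨r, hr, hnear⟩ := Metric.continuousAt_iff.1 hφ.continuousAt (ε / 2) (half_pos hε)
  obtain ⟨θ, hθ0, hθ, hfar⟩ := exists_lt_forall_le_of_le_dist hK hu hu0 hpos hlt hr
  have htail := (tendsto_pow_div_setIntegral_pow (μ := μ) hK hu hu0 hsupp hθ0 hθ).const_mul
    (C * μ.real K)
  rw [mul_zero] at htail
  filter_upwards [htail.eventually (gt_mem_nhds (half_pos hε))] with d hd
  have hI := setIntegral_pow_pos (μ := μ) hK hu hu0 hsupp hpos d
  have hbound := abs_setIntegral_mul_pow_sub_le (μ := μ) hK hu hu0 hφ (half_pos hε).le hθ0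
    (fun z _ hz => by simpa [← Real.dist_eq] using (hnear hz).le) (fun z hz => hC z hz) hfar d
  rw [Real.dist_eq, div_sub' hI.ne', abs_div, abs_of_pos hI, div_lt_iff₀ hI, mul_comm _ (φ x₀)]
  calc _ ≤ ε / 2 * ∫ z in K, u z ^ d ∂μ + C * θ ^ d * μ.real K := hbound
    _ = (ε / 2 + C * μ.real K * (θ ^ d / ∫ z in K, u z ^ d ∂μ)) * ∫ z in K, u z ^ d ∂μ := by
        field_simp
    _ < ε * ∫ z in K, u z ^ d ∂μ := by gcongr; linarith

end Concentration

theorem Convex.measure_inter_ball_pos {E : Type*} [NormedAddCommGroup E] [NormedSpace ℝ E]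
    [MeasurableSpace E] {μ : Measure E} [μ.IsOpenPosMeasure] {K : Set E} (hconv : Convex ℝ K)
    (hKint : (interior K).Nonempty) {x : E} (hx : x ∈ K) {s : ℝ} (hs : 0 < s) :
    0 < μ (K ∩ ball x s) := by
  have hx' : x ∈ closure (interior K) := by
    rw [hconv.closure_interior_eq_closure_of_nonempty_interior hKint]
    exact subset_closure hx
  obtain ⟨y, hy, hxy⟩ := Metric.mem_closure_iff.1 hx' s hs
  have hyball : y ∈ ball x s := by rwa [mem_ball, dist_comm]
  calc 0 < μ (interior K ∩ ball x s) :=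
        (isOpen_interior.inter isOpen_ball).measure_pos μ ⟨y, hy, hyball⟩
    _ ≤ μ (K ∩ ball x s) := measure_mono (inter_subset_inter_left _ interior_subset)

theorem integral_mem_closure_convexHull_image {X E : Type*} [MeasurableSpace X]
    [NormedAddCommGroup E] [NormedSpace ℝ E] [CompleteSpace E] {P : Measure X}
    [IsProbabilityMeasure P] {K : Set X} {F : X → E} (hK : ∀ᵐ x ∂P, x ∈ K)
    (hF : Integrable F P) : ∫ x, F x ∂P ∈ closure (convexHull ℝ (F '' K)) :=
  (convex_convexHull ℝ _).closure.integral_mem isClosed_closure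
    (hK.mono fun _ hx => subset_closure (subset_convexHull ℝ _ (mem_image_of_mem F hx))) hF

section SOSDensity

variable {n : ℕ}

theorem exists_peak_polynomial {K : Set (Fin n → ℝ)} (hK : IsCompact K) (c : Fin n → ℝ) :
    ∃ u : MvPolynomial (Fin n) ℝ, u.totalDegree ≤ 2 ∧ eval c u = 1 ∧
      ∀ z ∈ K, 0 ≤ eval z u ∧ (z ≠ c → eval z u < 1) := by
  obtain ⟨B, hB⟩ := hK.exists_bound_of_continuousOn
    (f := fun z : Fin n → ℝ => ∑ j, (z j - c j) ^ 2) (by fun_prop)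
  set M := max B 1
  have hM : 0 < M := lt_max_of_lt_right one_pos
  refine ⟨1 - C M⁻¹ * ∑ j, (X j - C (c j)) ^ 2, ?_, by simp, fun z hz => ?_⟩
  · refine (totalDegree_sub _ _).trans (max_le (by simp) ((totalDegree_mul _ _).trans ?_))
    rw [totalDegree_C, zero_add]
    refine (totalDegree_finsetSum _ _).trans
      (Finset.sup_le fun j _ => (totalDegree_pow _ 2).trans ?_)
    have : (X j - C (c j) : MvPolynomial (Fin n) ℝ).totalDegree ≤ 1 :=
      (totalDegree_sub _ _).trans (max_le (by simp [totalDegree_X]) (by simp))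
    omega
  · have heval : eval z (1 - C M⁻¹ * ∑ j, (X j - C (c j)) ^ 2) =
        1 - (∑ j, (z j - c j) ^ 2) / M := by
      simp [div_eq_inv_mul]
    rw [heval]
    refine ⟨?_, fun hzc => ?_⟩
    · have : ∑ j, (z j - c j) ^ 2 ≤ M :=
        (le_abs_self _).trans ((hB z hz).trans (le_max_left _ _))
      exact sub_nonneg.2 ((div_le_one hM).2 this)
    · obtain ⟨j, hj⟩ := Function.ne_iff.1 hzc
      have : 0 < ∑ j, (z j - c j) ^ 2 := Finset.sum_pos' (fun j _ => sq_nonneg _)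
        ⟨j, Finset.mem_univ j, by positivity [sub_ne_zero.2 hj]⟩
      exact sub_lt_self 1 (div_pos this hM)

def sosDensityMoments {ι : Type*} (μ : Measure (Fin n → ℝ)) (g : ι → MvPolynomial (Fin n) ℝ) :
    Set (ι → ℝ) :=
  {v | ∃ d h, IsSOS d h ∧ ∫ z, eval z h ∂μ = 1 ∧ ∀ i, ∫ z, eval z (g i) * eval z h ∂μ = v i}

variable {ι : Type*} {μ : Measure (Fin n → ℝ)} (g : ι → MvPolynomial (Fin n) ℝ)

theorem convex_sosDensityMoments
    (hint : ∀ q : MvPolynomial (Fin n) ℝ, Integrable (fun z => eval z q) μ) :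
    Convex ℝ (sosDensityMoments μ g) := by
  rintro v₁ ⟨d₁, h₁, hsos₁, hnorm₁, hmom₁⟩ v₂ ⟨d₂, h₂, hsos₂, hnorm₂, hmom₂⟩ a b ha hb hab
  refine ⟨max d₁ d₂, C a * h₁ + C b * h₂,
    ((hsos₁.mono (le_max_left _ _)).C_mul ha).add ((hsos₂.mono (le_max_right _ _)).C_mul hb),
    ?_, fun i => ?_⟩
  · simp only [map_add, map_mul, eval_C]
    rw [integral_add ((hint h₁).const_mul a) ((hint h₂).const_mul b), integral_const_mul,
      integral_const_mul, hnorm₁, hnorm₂, mul_one, mul_one, hab]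
  · have hint' (c : ℝ) (h : MvPolynomial (Fin n) ℝ) :
        Integrable (fun z => eval z (g i) * (c * eval z h)) μ := by
      simpa [mul_left_comm] using (hint (g i * h)).const_mul c
    simp only [map_add, map_mul, eval_C, mul_add]
    rw [integral_add (hint' a h₁) (hint' b h₂)]
    simp_rw [mul_left_comm (eval _ (g i))]
    rw [integral_const_mul, integral_const_mul, hmom₁, hmom₂]
    rfl

variable [IsFiniteMeasureOnCompacts μ] {K : Set (Fin n → ℝ)}

theorem mem_closure_sosDensityMoments (hK : IsCompact K) {x : Fin n → ℝ}
    (hsupp : ∀ s > 0, 0 < μ (K ∩ ball x s)) :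
    (fun i => eval x (g i)) ∈ closure (sosDensityMoments (μ.restrict K) g) := by
  obtain ⟨u, hdeg, hux, hu⟩ := exists_peak_polynomial hK x
  have hcont : Continuous fun z => eval z u := continuous_eval u
  have hu0 : ∀ z ∈ K, 0 ≤ eval z u := fun z hz => (hu z hz).1
  have hpos : 0 < eval x u := hux ▸ one_pos
  have hlt : ∀ z ∈ K, z ≠ x → eval z u < eval x u := fun z hz hzx => hux ▸ (hu z hz).2 hzx
  have hI (d : ℕ) : 0 < ∫ z in K, eval z u ^ d ∂μ :=
    setIntegral_pow_pos hK hcont hu0 hsupp hpos d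
  refine mem_closure_of_tendsto (tendsto_pi_nhds.2 fun i =>
    (tendsto_setIntegral_mul_pow_div_setIntegral_pow hK hcont hu0 hpos hlt hsupp
      (continuous_eval (g i))).comp (strictMono_mul_right_of_pos two_pos).tendsto_atTop)
    (Eventually.of_forall fun d => ?_)
  refine ⟨d * 2, C (∫ z in K, eval z u ^ (d * 2) ∂μ)⁻¹ * (u ^ d) ^ 2,
    (isSOS_sq ((totalDegree_pow u d).trans (Nat.mul_le_mul_left d hdeg))).C_mul
      (inv_nonneg.2 (hI _).le), ?_, fun i => ?_⟩
  · simp only [map_mul, eval_C, map_pow, ← pow_mul]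
    rw [integral_const_mul, inv_mul_cancel₀ (hI _).ne']
  · simp only [map_mul, eval_C, map_pow, ← pow_mul, Function.comp_apply]
    simp_rw [mul_left_comm (eval _ (g i))]
    rw [integral_const_mul, inv_mul_eq_div]

theorem closure_convexHull_image_subset_closure_sosDensityMoments (hK : IsCompact K)
    (hsupp : ∀ x ∈ K, ∀ s > 0, 0 < μ (K ∩ ball x s)) :
    closure (convexHull ℝ ((fun z i => eval z (g i)) '' K)) ⊆
      closure (sosDensityMoments (μ.restrict K) g) :=
  closure_minimal (convexHull_min
      (image_subset_iff.2 fun x hx => mem_closure_sosDensityMoments g hK (hsupp x hx))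
      (convex_sosDensityMoments g fun q =>
        (continuous_eval q).continuousOn.integrableOn_compact hK).closure)
    isClosed_closure

end SOSDensity

theorem moment_problem_approx_by_sos_density_general
    {n : ℕ} (p : ℕ) (K : Set (Fin n → ℝ)) (hK : IsCompact K)
    (hconv : Convex ℝ K) (hKint : (interior K).Nonempty)
    (f0 : MvPolynomial (Fin n) ℝ) (f : Fin p → MvPolynomial (Fin n) ℝ) (b : Fin p → ℝ)
    (Feas : Measure (Fin n → ℝ) → Prop)
    (hFeas : ∀ P : Measure (Fin n → ℝ), Feas P ↔ IsProbabilityMeasure P ∧ P Kᶜ = 0 ∧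
      ∀ i, (∫ z, eval z (f i) ∂P) = b i)
    (val : ℝ)
    (hatt : ∃ P, Feas P ∧ (∫ z, eval z f0 ∂P) = val) :
    ∀ ε > (0 : ℝ), ∃ (d : ℕ) (h : MvPolynomial (Fin n) ℝ), IsSOS d h ∧
      (∫ z in K, eval z h) = 1 ∧
      |(∫ z in K, eval z f0 * eval z h) - val| < ε ∧
      ∀ i, |(∫ z in K, eval z (f i) * eval z h) - b i| < ε := by
  intro ε hε
  obtain ⟨P, hP, hPval⟩ := hatt
  obtain ⟨hPprob, hPK, hPmom⟩ := (hFeas P).1 hP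
  set g : Fin (p + 1) → MvPolynomial (Fin n) ℝ := Fin.cons f0 f
  have hKae : ∀ᵐ z ∂P, z ∈ K := ae_iff.2 hPK
  have hint : Integrable (fun z i => eval z (g i)) P := by
    rw [← Measure.restrict_eq_self_of_ae_mem hKae]
    exact (continuous_pi fun i => continuous_eval (g i)).continuousOn.integrableOn_compact hK
  have hmom : ∫ z, (fun i => eval z (g i)) ∂P = Fin.cons val b := by
    funext i
    rw [eval_integral (fun i => hint.eval i)]
    refine Fin.cases ?_ (fun j => ?_) i
    · simpa [g] using hPval
    · simpa [g] using hPmom j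
  have hv := closure_convexHull_image_subset_closure_sosDensityMoments g hK
    (fun x hx s hs => hconv.measure_inter_ball_pos (μ := volume) hKint hx hs)
    (hmom ▸ integral_mem_closure_convexHull_image hKae hint)
  obtain ⟨w, ⟨d, h, hsos, hnorm, hw⟩, hdist⟩ := Metric.mem_closure_iff.1 hv ε hε
  have hcoord (i : Fin (p + 1)) :
      |(∫ z in K, eval z (g i) * eval z h) - (Fin.cons val b : Fin (p + 1) → ℝ) i| < ε := by
    rw [hw i, ← Real.dist_eq, dist_comm]
    exact (dist_le_pi_dist _ _ i).trans_lt hdist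
  exact ⟨d, h, hsos, hnorm, by simpa [g] using hcoord 0,
    fun i => by simpa [g] using hcoord i.succ⟩

/-- on a convex body `K` with the Lebesgue reference measure, the optimal
value of the attained problem of moments can be approximated to within any `ε > 0` by SOS
polynomial densities of sufficiently high degree. -/
theorem moment_problem_approx_by_sos_density
    {n : ℕ} (p : ℕ) (K : Set (Fin n → ℝ)) (hK : IsCompact K)
    (hconv : Convex ℝ K) (hKint : (interior K).Nonempty)
    (f0 : MvPolynomial (Fin n) ℝ) (f : Fin p → MvPolynomial (Fin n) ℝ) (b : Fin p → ℝ)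
    (Feas : Measure (Fin n → ℝ) → Prop)
    (hFeas : ∀ P : Measure (Fin n → ℝ), Feas P ↔ IsProbabilityMeasure P ∧ P Kᶜ = 0 ∧
      ∀ i, (∫ z, eval z (f i) ∂P) = b i)
    (val : ℝ)
    (hval : val = sInf {v : ℝ | ∃ P, Feas P ∧ v = ∫ z, eval z f0 ∂P})
    (hatt : ∃ P, Feas P ∧ (∫ z, eval z f0 ∂P) = val) :
    ∀ ε > (0 : ℝ), ∃ (d : ℕ) (h : MvPolynomial (Fin n) ℝ), IsSOS d h ∧
      (∫ z in K, eval z h) = 1 ∧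
      |(∫ z in K, eval z f0 * eval z h) - val| < ε ∧
      ∀ i, |(∫ z in K, eval z (f i) * eval z h) - b i| < ε :=
  moment_problem_approx_by_sos_density_general p K hK hconv hKint f0 f b Feas hFeas val hatt
end
end
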